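/- Let (B_n)_{n≥1} be a sequence of subsets of ℝ² such that each B_n is a finite union of pairwise disjoint closed axis-parallel squares of common side length d_n, B_{n+1} ⊆ interior(B_n) for every n, and d_n → 0 as n → ∞; set B = ⋂_{n≥1} B_n (a closed set). Then the stopping map Φ is discontinuous at every f ∈ C([0,1],ℝ²) with τ(f) < 1 and Φ(f) ≠ f: there is a sequence g_n ∈ C([0,1],ℝ²) with sup_{t∈[0,1]}‖g_n(t)−f(t)‖ → 0 and Φ(g_n) = g_n for all n, so Φ(g_n) → f ≠ Φ(f). -/

import Mathlib

/-!
Each `Bₙ` is a finite union of disjoint closed balls of radius `dₙ / 2` for the sup norm on `ℝ²`,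
and `B` lies in the union of their interiors. A path is pushed out of these balls one ball at a
time: cut `[0, 1]` into pieces so short that on each piece the path either avoids the centre, where
radial projection onto the boundary square is continuous, or stays inside the ball, where the piece
is replaced by a path in the path-connected boundary. The new path misses `B` and stays within
`2 dₙ` of the old one, so it is a fixed point of `Φ`; these fixed points converge to `f ≠ Φ f`.
-/

open Filter Topology

noncomputable section

/-- The closed axis-parallel square `[a, a+d] × [b, b+d]` in `ℝ²`. -/
def closedSquare (a b d : ℝ) : Set (EuclideanSpace ℝ (Fin 2)) :=
  {x | x 0 ∈ Set.Icc a (a + d) ∧ x 1 ∈ Set.Icc b (b + d)}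

/-- `S` is a finite union of pairwise disjoint closed axis-parallel squares of common
side length `d`. -/
def IsSquareUnion (S : Set (EuclideanSpace ℝ (Fin 2))) (d : ℝ) : Prop :=
  ∃ c : Finset (ℝ × ℝ),
    (S = ⋃ p ∈ c, closedSquare p.1 p.2 d) ∧
    (c : Set (ℝ × ℝ)).Pairwise fun p q =>
      Disjoint (closedSquare p.1 p.2 d) (closedSquare q.1 q.2 d)

/-- The hitting-time functional: `τ(f) = min(inf {t ∈ [0,1] : f t ∈ B}, 1)`,
with the convention `inf ∅ = +∞` (realized by adjoining `1` to the set). -/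
def hitTime (B : Set (EuclideanSpace ℝ (Fin 2)))
    (f : C(unitInterval, EuclideanSpace ℝ (Fin 2))) : ℝ :=
  sInf ({t : ℝ | ∃ ht : t ∈ Set.Icc (0 : ℝ) 1, f ⟨t, ht⟩ ∈ B} ∪ {1})

/-- The stopping map `Φ(f)(t) = f(min(t, τ(f)))`. -/
def stopMap (B : Set (EuclideanSpace ℝ (Fin 2)))
    (f : C(unitInterval, EuclideanSpace ℝ (Fin 2))) :
    C(unitInterval, EuclideanSpace ℝ (Fin 2)) :=
  ⟨fun t => f (Set.projIcc (0 : ℝ) 1 zero_le_one (min t.1 (hitTime B f))),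
    f.continuous.comp (continuous_projIcc.comp
      (continuous_subtype_val.min continuous_const))⟩

open Metric Set unitInterval

lemma exists_mem_Icc_div {N : ℕ} (hN : 0 < N) {t : ℝ} (ht : t ∈ Icc (0 : ℝ) 1) :
    ∃ k < N, t ∈ Icc ((k : ℝ) / N) ((k + 1) / N) := by
  have hN' : (0 : ℝ) < N := Nat.cast_pos.2 hN
  have hfloor : (⌊(N : ℝ) * t⌋₊ : ℝ) ≤ N * t := Nat.floor_le (mul_nonneg hN'.le ht.1)
  refine ⟨min ⌊(N : ℝ) * t⌋₊ (N - 1), (min_le_right _ _).trans_lt (by omega), ?_, ?_⟩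
  · rw [div_le_iff₀ hN', mul_comm t]
    exact (Nat.cast_le.2 (min_le_left _ _)).trans hfloor
  · rw [le_div_iff₀ hN', mul_comm t]
    rcases min_choice ⌊(N : ℝ) * t⌋₊ (N - 1) with h | h <;> rw [h]
    · exact (Nat.lt_floor_add_one _).le
    · rw [Nat.cast_sub hN, Nat.cast_one, sub_add_cancel]
      nlinarith [ht.2]

lemma eq_succ_of_mem_Icc_div {N j k : ℕ} (hN : 0 < N) {t : ℝ}
    (hj : t ∈ Icc ((j : ℝ) / N) ((j + 1) / N)) (hk : t ∈ Icc ((k : ℝ) / N) ((k + 1) / N))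
    (hjk : j < k) : k = j + 1 ∧ t = (j + 1) / N := by
  have hkj : (k : ℝ) / N ≤ (j + 1) / N := hk.1.trans hj.2
  rw [div_le_div_iff_of_pos_right (Nat.cast_pos.2 hN)] at hkj
  have hk' : k = j + 1 := by
    have : k ≤ j + 1 := by exact_mod_cast hkj
    omega
  refine ⟨hk', le_antisymm hj.2 ?_⟩
  simpa [hk'] using hk.1

theorem exists_continuousMap_eq_on_Icc_div {X : Type*} [TopologicalSpace X] {N : ℕ}
    (hN : 0 < N) (p : ℕ → ℝ → X)
    (hp : ∀ k < N, ContinuousOn (p k) (Icc ((k : ℝ) / N) ((k + 1) / N)))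
    (hmatch : ∀ k, k + 1 < N → p k ((k + 1) / N) = p (k + 1) ((k + 1) / N)) :
    ∃ G : C(I, X), ∀ k < N, ∀ t : I, (t : ℝ) ∈ Icc ((k : ℝ) / N) ((k + 1) / N) →
      G t = p k t := by
  have eq_piece {j k : ℕ} (hj : j < N) (hk : k < N) {t : ℝ}
      (htj : t ∈ Icc ((j : ℝ) / N) ((j + 1) / N)) (htk : t ∈ Icc ((k : ℝ) / N) ((k + 1) / N)) :
      p j t = p k t := by
    rcases lt_trichotomy j k with h | rfl | h
    · obtain ⟨rfl, rfl⟩ := eq_succ_of_mem_Icc_div hN htj htk h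
      exact hmatch j hk
    · rfl
    · obtain ⟨rfl, rfl⟩ := eq_succ_of_mem_Icc_div hN htk htj h
      exact (hmatch k hj).symm
  choose idx hidx_lt hidx using fun t : I => exists_mem_Icc_div hN t.2
  refine ⟨⟨fun t => p (idx t) t, ?_⟩, fun k hk t ht => eq_piece (hidx_lt t) hk (hidx t) ht⟩
  refine (locallyFinite_of_finite fun k : Fin N =>
    ((↑) : I → ℝ) ⁻¹' Icc ((k : ℝ) / N) ((k + 1) / N)).continuous ?_
    (fun k => isClosed_Icc.preimage continuous_subtype_val) (fun k => ?_)
  · exact eq_univ_of_forall fun t => mem_iUnion.2 ⟨⟨idx t, hidx_lt t⟩, hidx t⟩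
  · exact ((hp k k.2).comp continuous_subtype_val.continuousOn fun t ht => ht).congr
      fun t ht => eq_piece (hidx_lt t) k.2 (hidx t) ht

lemma exists_Icc_div_ne_or_mem_ball {X : Type*} [PseudoMetricSpace X] (f : C(I, X)) (c : X)
    {r : ℝ} (hr : 0 < r) :
    ∃ N : ℕ, 0 < N ∧ ∀ k : ℕ,
      (∀ t ∈ Icc ((k : ℝ) / N) ((k + 1) / N), IccExtend zero_le_one f t ≠ c) ∨
        ∀ t ∈ Icc ((k : ℝ) / N) ((k + 1) / N), IccExtend zero_le_one f t ∈ ball c r := by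
  set F : ℝ → X := IccExtend zero_le_one f
  have hF : UniformContinuous F :=
    (CompactSpace.uniformContinuous_of_continuous f.continuous).comp
      (LipschitzWith.projIcc zero_le_one).uniformContinuous
  obtain ⟨δ, hδ, hFδ⟩ := Metric.uniformContinuous_iff.1 hF (r / 2) (half_pos hr)
  obtain ⟨n, hn⟩ := exists_nat_one_div_lt hδ
  refine ⟨n + 1, n.succ_pos, fun k => ?_⟩
  by_cases h : ∃ t₁ ∈ Icc ((k : ℝ) / (n + 1 : ℕ)) ((k + 1) / (n + 1 : ℕ)),
      F t₁ ∈ closedBall c (r / 2)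
  · obtain ⟨t₁, ht₁, hFt₁⟩ := h
    refine Or.inr fun t ht => ?_
    have hclose : dist t t₁ < δ := by
      refine (Real.dist_le_of_mem_Icc ht ht₁).trans_lt ?_
      rw [← sub_div, add_sub_cancel_left]
      exact_mod_cast hn
    calc dist (F t) c ≤ dist (F t) (F t₁) + dist (F t₁) c := dist_triangle _ _ _
      _ < r / 2 + r / 2 := add_lt_add_of_lt_of_le (hFδ hclose) hFt₁
      _ = r := add_halves r
  · push Not at h
    exact Or.inl fun t ht hFt => h t ht (hFt ▸ mem_closedBall_self (half_pos hr).le)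

theorem interior_biUnion_finset_of_pairwiseDisjoint {X ι : Type*} [TopologicalSpace X]
    {s : Finset ι} {F : ι → Set X} (hF : ∀ i ∈ s, IsClosed (F i))
    (hdisj : (s : Set ι).PairwiseDisjoint F) :
    interior (⋃ i ∈ s, F i) = ⋃ i ∈ s, interior (F i) := by
  classical
  induction s using Finset.induction_on with
  | empty => simp
  | insert j s hj ih =>
    rw [Finset.coe_insert, Set.pairwiseDisjoint_insert] at hdisj
    have hFs : ∀ i ∈ s, IsClosed (F i) := fun i hi => hF i (Finset.mem_insert_of_mem hi)
    simp only [Finset.set_biUnion_insert]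
    rw [interior_union_of_disjoint_closure, ih hFs hdisj.1]
    rw [(hF j (Finset.mem_insert_self j s)).closure_eq, (isClosed_biUnion_finset hFs).closure_eq]
    exact Set.disjoint_iUnion₂_right.2 fun i hi => hdisj.2 i hi (ne_of_mem_of_not_mem hi hj).symm

section PushedOut

variable {X : Type*} [PseudoMetricSpace X] {c w z : X} {r : ℝ}

def PushedOut (c : X) (r : ℝ) (w z : X) : Prop :=
  (w ∈ ball c r → z ∈ sphere c r) ∧ (w ∉ ball c r → z = w)

lemma PushedOut.notMem_ball (h : PushedOut c r w z) : z ∉ ball c r := by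
  by_cases hw : w ∈ ball c r
  · exact fun hz => (mem_ball.1 hz).ne (h.1 hw)
  · rwa [h.2 hw]

end PushedOut

section PushOut

variable {V : Type*} [NormedAddCommGroup V] [NormedSpace ℝ V] {c x₀ w : V} {r : ℝ}

-- `x₀` is a junk value for the centre, which has no radial direction.
open Classical in
def pushOut (c : V) (r : ℝ) (x₀ w : V) : V :=
  if w = c then x₀ else c + max 1 (r / ‖w - c‖) • (w - c)

lemma dist_pushOut_of_ne (hw : w ≠ c) :
    dist (pushOut c r x₀ w) c = max (dist w c) r := by
  have hpos : 0 < ‖w - c‖ := norm_pos_iff.2 (sub_ne_zero.2 hw)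
  rw [pushOut, if_neg hw, dist_eq_norm, add_sub_cancel_left, norm_smul, Real.norm_eq_abs,
    abs_of_pos (lt_max_of_lt_left one_pos), max_mul_of_nonneg _ _ hpos.le, one_mul,
    div_mul_cancel₀ _ hpos.ne', dist_eq_norm]

lemma pushOut_of_notMem_ball (hr : 0 < r) (hw : w ∉ ball c r) : pushOut c r x₀ w = w := by
  have hwc : w ≠ c := fun h => hw (h ▸ mem_ball_self hr)
  have hpos : 0 < ‖w - c‖ := norm_pos_iff.2 (sub_ne_zero.2 hwc)
  rw [mem_ball, not_lt, dist_eq_norm] at hw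
  rw [pushOut, if_neg hwc, max_eq_left ((div_le_one hpos).2 hw), one_smul, add_sub_cancel]

lemma pushOut_mem_sphere (hx₀ : x₀ ∈ sphere c r) (hw : w ∈ ball c r) :
    pushOut c r x₀ w ∈ sphere c r := by
  by_cases hwc : w = c
  · rwa [pushOut, if_pos hwc]
  · rw [mem_sphere, dist_pushOut_of_ne hwc, max_eq_right (mem_ball.1 hw).le]

lemma continuousOn_pushOut : ContinuousOn (pushOut c r x₀) {c}ᶜ := by
  refine ContinuousOn.congr (f := fun w => c + max 1 (r / ‖w - c‖) • (w - c)) ?_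
    fun w hw => by rw [pushOut, if_neg (show w ≠ c from hw)]
  refine fun w hw => ContinuousAt.continuousWithinAt ?_
  have hwc : ‖w - c‖ ≠ 0 := norm_ne_zero_iff.2 (sub_ne_zero.2 hw)
  fun_prop (disch := exact hwc)

lemma pushedOut_pushOut (hr : 0 < r) (hx₀ : x₀ ∈ sphere c r) (w : V) :
    PushedOut c r w (pushOut c r x₀ w) :=
  ⟨pushOut_mem_sphere hx₀, pushOut_of_notMem_ball hr⟩

theorem exists_pushedOut_piece (hV : 1 < Module.rank ℝ V) (hr : 0 < r)
    (hx₀ : x₀ ∈ sphere c r) {F : ℝ → V} {a b : ℝ} (hab : a < b) (hF : ContinuousOn F (Icc a b))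
    (hsplit : (∀ t ∈ Icc a b, F t ≠ c) ∨ ∀ t ∈ Icc a b, F t ∈ ball c r) :
    ∃ p : ℝ → V, ContinuousOn p (Icc a b) ∧ p a = pushOut c r x₀ (F a) ∧
      p b = pushOut c r x₀ (F b) ∧ ∀ t ∈ Icc a b, PushedOut c r (F t) (p t) := by
  rcases hsplit with havoid | hinside
  · exact ⟨fun t => pushOut c r x₀ (F t), continuousOn_pushOut.comp hF havoid, rfl, rfl,
      fun t _ => pushedOut_pushOut hr hx₀ (F t)⟩
  have hend : ∀ t ∈ Icc a b, pushOut c r x₀ (F t) ∈ sphere c r :=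
    fun t ht => pushOut_mem_sphere hx₀ (hinside t ht)
  let γ := ((isPathConnected_sphere hV c hr.le).joinedIn _ (hend a (left_mem_Icc.2 hab.le)) _
    (hend b (right_mem_Icc.2 hab.le))).somePath
  refine ⟨fun t => γ.extend ((t - a) / (b - a)), ?_, ?_, ?_, fun t ht => ⟨fun _ => ?_, ?_⟩⟩
  · exact (γ.continuous_extend.comp (by fun_prop)).continuousOn
  · simp
  · simp [div_self (sub_pos.2 hab).ne']
  · exact JoinedIn.somePath_mem _ _
  · exact fun h => (h (hinside t ht)).elim

theorem exists_pushedOut_path (hV : 1 < Module.rank ℝ V) (c : V) (r : ℝ) (f : C(I, V)) :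
    ∃ g : C(I, V), ∀ t, PushedOut c r (f t) (g t) := by
  rcases le_or_gt r 0 with hr | hr
  · exact ⟨f, fun t => ⟨fun h => by simp [ball_eq_empty.2 hr] at h, fun _ => rfl⟩⟩
  have : Nontrivial V := rank_pos_iff_nontrivial.1 (zero_lt_one.trans hV)
  obtain ⟨x₀, hx₀⟩ := (NormedSpace.sphere_nonempty (x := c)).2 hr.le
  obtain ⟨N, hN, hsplit⟩ := exists_Icc_div_ne_or_mem_ball f c hr
  choose p hp using fun k : ℕ => exists_pushedOut_piece hV hr hx₀
    (div_lt_div_of_pos_right (lt_add_one (k : ℝ)) (Nat.cast_pos.2 hN))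
    f.continuous.Icc_extend'.continuousOn (hsplit k)
  obtain ⟨G, hG⟩ := exists_continuousMap_eq_on_Icc_div hN p (fun k _ => (hp k).1)
    fun k _ => by
      have h := (hp (k + 1)).2.1
      push_cast at h
      rw [(hp k).2.2.1, h]
  refine ⟨G, fun t => ?_⟩
  obtain ⟨k, hk, hkt⟩ := exists_mem_Icc_div hN t.2
  rw [hG k hk t hkt]
  simpa using (hp k).2.2.2 t hkt

theorem exists_path_avoiding_balls (hV : 1 < Module.rank ℝ V) {ι : Type*} (s : Finset ι)
    (c : ι → V) (r : ℝ) (hdisj : (s : Set ι).PairwiseDisjoint fun i => closedBall (c i) r)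
    (f : C(I, V)) :
    ∃ g : C(I, V), ∀ t, (∀ i ∈ s, g t ∉ ball (c i) r) ∧
      (g t = f t ∨ ∃ i ∈ s, f t ∈ closedBall (c i) r ∧ g t ∈ closedBall (c i) r) := by
  classical
  induction s using Finset.induction_on with
  | empty => exact ⟨f, fun t => ⟨by simp, Or.inl rfl⟩⟩
  | insert j s hj ih =>
    rw [Finset.coe_insert, Set.pairwiseDisjoint_insert] at hdisj
    obtain ⟨g, hg⟩ := ih hdisj.1
    obtain ⟨h, hh⟩ := exists_pushedOut_path hV (c j) r g
    have hsep {i : ι} (hi : i ∈ s) {x : V} (hxj : x ∈ closedBall (c j) r) :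
        x ∉ closedBall (c i) r :=
      Set.disjoint_left.1 (hdisj.2 i hi (ne_of_mem_of_not_mem hi hj).symm) hxj
    refine ⟨h, fun t => ?_⟩
    by_cases hgt : g t ∈ ball (c j) r
    · have hht : h t ∈ closedBall (c j) r := sphere_subset_closedBall ((hh t).1 hgt)
      refine ⟨fun i hi => ?_, Or.inr ⟨j, Finset.mem_insert_self _ _, ?_, hht⟩⟩
      · rcases Finset.mem_insert.1 hi with rfl | hi
        · exact (hh t).notMem_ball
        · exact fun hb => hsep hi hht (ball_subset_closedBall hb)
      · rcases (hg t).2 with hgf | ⟨i, hi, -, hgi⟩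
        · exact hgf ▸ ball_subset_closedBall hgt
        · exact absurd hgi (hsep hi (ball_subset_closedBall hgt))
    · rw [(hh t).2 hgt]
      refine ⟨fun i hi => ?_, ?_⟩
      · rcases Finset.mem_insert.1 hi with rfl | hi
        exacts [hgt, (hg t).1 i hi]
      · rcases (hg t).2 with hgf | ⟨i, hi, hfi, hgi⟩
        exacts [Or.inl hgf, Or.inr ⟨i, Finset.mem_insert_of_mem hi, hfi, hgi⟩]

end PushOut

def planeEquiv : EuclideanSpace ℝ (Fin 2) ≃L[ℝ] ℝ × ℝ :=
  (EuclideanSpace.equiv (Fin 2) ℝ).trans (ContinuousLinearEquiv.finTwoArrow ℝ ℝ)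

@[simp]
lemma planeEquiv_apply (x : EuclideanSpace ℝ (Fin 2)) : planeEquiv x = (x 0, x 1) := rfl

lemma norm_planeEquiv_symm_le (u : ℝ × ℝ) : ‖planeEquiv.symm u‖ ≤ 2 * ‖u‖ := by
  have h1 : |u.1| ≤ ‖u‖ := norm_fst_le u
  have h2 : |u.2| ≤ ‖u‖ := norm_snd_le u
  rw [EuclideanSpace.norm_eq, Real.sqrt_le_left (by positivity)]
  have e0 : (planeEquiv.symm u) 0 = u.1 := rfl
  have e1 : (planeEquiv.symm u) 1 = u.2 := rfl
  simp only [Fin.sum_univ_two, Real.norm_eq_abs, sq_abs, e0, e1]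
  nlinarith [sq_abs u.1, sq_abs u.2, abs_nonneg u.1, abs_nonneg u.2]

lemma closedSquare_eq_preimage (a b d : ℝ) :
    closedSquare a b d = planeEquiv ⁻¹' closedBall (a + d / 2, b + d / 2) (d / 2) := by
  ext x
  simp [closedSquare, ← closedBall_prod_same, Real.closedBall_eq_Icc, add_assoc]
  tauto

lemma isClosed_closedSquare (a b d : ℝ) : IsClosed (closedSquare a b d) := by
  rw [closedSquare_eq_preimage]
  exact isClosed_closedBall.preimage planeEquiv.continuous

lemma interior_closedSquare (a b d : ℝ) :
    interior (closedSquare a b d) = planeEquiv ⁻¹' ball (a + d / 2, b + d / 2) (d / 2) := by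
  rw [closedSquare_eq_preimage, ← interior_closedBall']
  exact (planeEquiv.toHomeomorph.preimage_interior _).symm

theorem IsSquareUnion.exists_path_avoiding {S B : Set (EuclideanSpace ℝ (Fin 2))} {d : ℝ}
    (hS : IsSquareUnion S d) (hB : B ⊆ interior S) (f : C(I, EuclideanSpace ℝ (Fin 2))) :
    ∃ g : C(I, EuclideanSpace ℝ (Fin 2)), (∀ t, g t ∉ B) ∧ ‖g - f‖ ≤ 2 * |d| := by
  obtain ⟨s, rfl, hdisj⟩ := hS
  let e := planeEquiv
  let ctr : ℝ × ℝ → ℝ × ℝ := fun p => (p.1 + d / 2, p.2 + d / 2)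
  have hballs : (s : Set (ℝ × ℝ)).PairwiseDisjoint fun p => closedBall (ctr p) (d / 2) := by
    intro p hp q hq hpq
    have h := (hdisj hp hq hpq).preimage e.symm
    simpa [closedSquare_eq_preimage, e, ctr] using h
  have hrank : 1 < Module.rank ℝ (ℝ × ℝ) := by
    rw [rank_prod', Module.rank_self]; norm_num
  obtain ⟨g, hg⟩ := exists_path_avoiding_balls hrank s ctr (d / 2) hballs
    (ContinuousMap.comp ⟨e, e.continuous⟩ f)
  refine ⟨ContinuousMap.comp ⟨e.symm, e.symm.continuous⟩ g, fun t ht => ?_, ?_⟩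
  · rw [interior_biUnion_finset_of_pairwiseDisjoint (fun p _ => isClosed_closedSquare _ _ _)
      hdisj] at hB
    obtain ⟨p, hp, hmem⟩ := mem_iUnion₂.1 (hB ht)
    rw [interior_closedSquare] at hmem
    exact (hg t).1 p hp (by simpa [e] using hmem)
  · refine (ContinuousMap.norm_le _ (by positivity)).2 fun t => ?_
    have hdist : ‖g t - e (f t)‖ ≤ |d| := by
      rcases (hg t).2 with hgf | ⟨p, -, hfp, hgp⟩
      · simp [hgf]
      · rw [← dist_eq_norm]
        calc dist (g t) (e (f t)) ≤ d / 2 + d / 2 :=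
              (dist_triangle_right _ _ _).trans (add_le_add hgp hfp)
          _ ≤ |d| := by rw [add_halves]; exact le_abs_self d
    calc ‖e.symm (g t) - f t‖ = ‖e.symm (g t - e (f t))‖ := by simp
      _ ≤ 2 * ‖g t - e (f t)‖ := norm_planeEquiv_symm_le _
      _ ≤ 2 * |d| := by gcongr

lemma stopMap_eq_self_of_forall_notMem {B : Set (EuclideanSpace ℝ (Fin 2))}
    {g : C(I, EuclideanSpace ℝ (Fin 2))} (hg : ∀ t, g t ∉ B) : stopMap B g = g := by
  have hτ : hitTime B g = 1 := by
    have hempty : {t : ℝ | ∃ ht : t ∈ Icc (0 : ℝ) 1, g ⟨t, ht⟩ ∈ B} = ∅ :=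
      eq_empty_of_forall_notMem fun t ⟨ht, hgt⟩ => hg ⟨t, ht⟩ hgt
    rw [hitTime, hempty, empty_union, csInf_singleton]
  ext t : 1
  simp [stopMap, hτ, min_eq_left t.2.2]

theorem stopMap_discontinuous_at_carpet_general
    (Bseq : ℕ → Set (EuclideanSpace ℝ (Fin 2))) (dseq : ℕ → ℝ)
    (hsq : ∀ n, 1 ≤ n → IsSquareUnion (Bseq n) (dseq n))
    (hnest : ∀ n, 1 ≤ n → Bseq (n + 1) ⊆ interior (Bseq n))
    (hd : Tendsto dseq atTop (𝓝 0))
    (B : Set (EuclideanSpace ℝ (Fin 2))) (hB : B = ⋂ n ∈ {n : ℕ | 1 ≤ n}, Bseq n)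
    (f : C(unitInterval, EuclideanSpace ℝ (Fin 2)))
    (hne : stopMap B f ≠ f) :
    (∃ g : ℕ → C(unitInterval, EuclideanSpace ℝ (Fin 2)),
      Tendsto (fun n => ‖g n - f‖) atTop (𝓝 0) ∧ ∀ n, stopMap B (g n) = g n) ∧
      ¬ ContinuousAt (stopMap B) f := by
  have hBint (n : ℕ) : B ⊆ interior (Bseq (n + 1)) :=
    hB ▸ (biInter_subset_of_mem (show n + 2 ∈ {n : ℕ | 1 ≤ n} by simp)).trans
      (hnest (n + 1) (by omega))
  choose g hgB hgf using fun n => (hsq (n + 1) (by omega)).exists_path_avoiding (hBint n) f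
  have hfix (n : ℕ) : stopMap B (g n) = g n := stopMap_eq_self_of_forall_notMem (hgB n)
  have hlim : Tendsto (fun n => ‖g n - f‖) atTop (𝓝 0) := by
    refine squeeze_zero (fun n => norm_nonneg _) hgf ?_
    simpa using (hd.comp (tendsto_add_atTop_nat 1)).abs.const_mul 2
  refine ⟨⟨g, hlim, hfix⟩, fun hcont => hne ?_⟩
  have hgf' : Tendsto g atTop (𝓝 f) := tendsto_iff_norm_sub_tendsto_zero.2 hlim
  exact tendsto_nhds_unique ((hcont.tendsto.comp hgf').congr hfix) hgf'

/-- The stopping map `Φ` for a carpet-type set `B = ⋂ₙ Bₙ` is discontinuous at every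
`f` with `τ(f) < 1` and `Φ(f) ≠ f`: there is a sequence `gₙ → f` uniformly consisting
of fixed points of `Φ`, so `Φ(gₙ) → f ≠ Φ(f)`. -/
theorem stopMap_discontinuous_at_carpet
    (Bseq : ℕ → Set (EuclideanSpace ℝ (Fin 2))) (dseq : ℕ → ℝ)
    (hsq : ∀ n, 1 ≤ n → IsSquareUnion (Bseq n) (dseq n))
    (hnest : ∀ n, 1 ≤ n → Bseq (n + 1) ⊆ interior (Bseq n))
    (hd : Tendsto dseq atTop (𝓝 0))
    (B : Set (EuclideanSpace ℝ (Fin 2))) (hB : B = ⋂ n ∈ {n : ℕ | 1 ≤ n}, Bseq n)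
    (hBclosed : IsClosed B)
    (f : C(unitInterval, EuclideanSpace ℝ (Fin 2)))
    (hτ : hitTime B f < 1) (hne : stopMap B f ≠ f) :
    (∃ g : ℕ → C(unitInterval, EuclideanSpace ℝ (Fin 2)),
      Tendsto (fun n => ‖g n - f‖) atTop (𝓝 0) ∧ ∀ n, stopMap B (g n) = g n) ∧
      ¬ ContinuousAt (stopMap B) f :=
  stopMap_discontinuous_at_carpet_general Bseq dseq hsq hnest hd B hB f hne

end
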